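/- Identifiability of the joint distribution of all potential outcomes with a post-treatment variable (Corollary 3): Suppose two models (Ω, ℱ, μ, G, A, S⁰, S¹, Y⁰, Y¹) and (Ω', ℱ', μ', G', A', S'⁰, S'¹, Y'⁰, Y'¹) each satisfy Assumption 5, Assumption 6, and Condition 3, and have the same observed data distribution, i.e. μ(G=g, A=a, S=s, Y=y) = μ'(G'=g, A'=a, S'=s, Y'=y) for all g ∈ Fin m and a, s, y ∈ {0,1}. Then for all a, b, c, d ∈ {0,1} and every g: P(S⁰=a, S¹=b, Y⁰=c, Y¹=d | G=g) = P'(S'⁰=a, S'¹=b, Y'⁰=c, Y'¹=d | G'=g); consequently the principal stratification average causal effects PSACE_{ab|g} are identified whenever μ(S⁰=a, S¹=b, G=g) > 0. -/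

import Mathlib

/-!
Write `X⁰ = (S⁰, Y⁰)` and `X¹ = (S¹, Y¹)`. Within a trial the treatment is independent of the
potential states, so the control arm reveals `M(g, i) = P(X⁰ = i | G = g)` and the treated arm
reveals `P(X¹ = j | G = g)`. Transportability makes the transition kernel
`θ(j | i) = P(X¹ = j | X⁰ = i)` the same in every trial, so
`P(X¹ = j | G = g) = ∑ᵢ M(g, i) θ(j | i)`, and since `M` has full column rank this linear system
determines `θ`. The law of `(G, X⁰, X¹)` is `P(G = g) M(g, i) θ(j | i)`, hence identified, and both
conclusions are conditional probabilities of events of `(G, X⁰, X¹)`.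
-/

open MeasureTheory ProbabilityTheory

/-- Conditional probability `P(E | F) = μ(E ∩ F) / μ(F)` as a real number. -/
noncomputable def condP {Ω : Type*} [MeasurableSpace Ω] (μ : Measure Ω) (E F : Set Ω) : ℝ :=
  (μ (E ∩ F)).toReal / (μ F).toReal

open Set

theorem Matrix.mulVec_injective_of_rank_eq_card {m n K : Type*} [Fintype n] [Field K]
    {M : Matrix m n K} (h : M.rank = Fintype.card n) : Function.Injective M.mulVec := by
  have hker := LinearMap.finrank_range_add_finrank_ker M.mulVecLin
  rw [← Matrix.rank, h, Module.finrank_fintype_fun_eq_card, Nat.add_eq_left,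
    Submodule.finrank_eq_zero, LinearMap.ker_eq_bot] at hker
  exact hker

section condP

variable {Ω α : Type*} [MeasurableSpace Ω] {μ : Measure Ω}

theorem condP_def (E F : Set Ω) : condP μ E F = μ.real (E ∩ F) / μ.real F := rfl

theorem condP_congr_of_inter_eq {H H' E F : Set Ω} (h : H ∩ E = H' ∩ E) :
    condP μ H (E ∩ F) = condP μ H' (E ∩ F) := by
  rw [condP_def, condP_def, ← inter_assoc, h, inter_assoc]

variable [IsFiniteMeasure μ]

theorem measureReal_inter_eq_condP_mul (E F : Set Ω) :
    μ.real (E ∩ F) = condP μ E F * μ.real F := by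
  rcases eq_or_ne (μ.real F) 0 with hF | hF
  · rw [hF, mul_zero]
    exact measureReal_mono_null inter_subset_right hF
  · exact (div_mul_cancel₀ _ hF).symm

theorem condP_inter_eq_mul (H E F : Set Ω) :
    condP μ (H ∩ E) F = condP μ H (E ∩ F) * condP μ E F := by
  rw [condP_def, inter_assoc, measureReal_inter_eq_condP_mul H (E ∩ F), mul_div_assoc]
  rfl

theorem condP_compl {E F : Set Ω} (hE : MeasurableSet E) (hF : μ.real F ≠ 0) :
    condP μ Eᶜ F = 1 - condP μ E F := by
  have hsplit := measureReal_sdiff_add_inter (μ := μ) (s := F) hE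
  rw [condP_def, condP_def, ← sdiff_eq_compl_inter, inter_comm, eq_sub_iff_add_eq, ← add_div,
    hsplit, div_self hF]

theorem condP_inter_left_eq_of_indep {E H F : Set Ω}
    (hind : condP μ (E ∩ H) F = condP μ E F * condP μ H F) (hE : condP μ E F ≠ 0) :
    condP μ H (E ∩ F) = condP μ H F := by
  rw [inter_comm, condP_inter_eq_mul, mul_comm] at hind
  exact mul_left_cancel₀ hE hind

variable [Fintype α] [MeasurableSpace α] [MeasurableSingletonClass α] {f : Ω → α}

theorem measureReal_eq_sum_inter_fiber (hf : Measurable f) {E : Set Ω} :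
    μ.real E = ∑ a, μ.real (E ∩ {ω | f ω = a}) := by
  rw [← measureReal_restrict_apply_univ, ← preimage_univ (f := f), ← Finset.coe_univ,
    ← sum_measureReal_preimage_singleton _ fun a _ => hf (measurableSet_singleton a)]
  refine Finset.sum_congr rfl fun a _ => ?_
  rw [measureReal_restrict_apply (hf (measurableSet_singleton a)), inter_comm]
  rfl

theorem condP_eq_sum_inter_fiber (hf : Measurable f) (E F : Set Ω) :
    condP μ E F = ∑ a, condP μ (E ∩ {ω | f ω = a}) F := by
  rw [condP_def, measureReal_eq_sum_inter_fiber hf, Finset.sum_div]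
  simp only [condP_def, inter_right_comm]

theorem condP_inter_eq_mul_of_forall_fiber (hf : Measurable f) {E H F : Set Ω}
    (h : ∀ a, condP μ (E ∩ (H ∩ {ω | f ω = a})) F = condP μ E F * condP μ (H ∩ {ω | f ω = a}) F) :
    condP μ (E ∩ H) F = condP μ E F * condP μ H F := by
  rw [condP_eq_sum_inter_fiber hf (E ∩ H), condP_eq_sum_inter_fiber hf H, Finset.mul_sum]
  simp only [inter_assoc, h]

end condP

section map

variable {Ω Ω' α : Type*} [MeasurableSpace Ω] [MeasurableSpace Ω'] [MeasurableSpace α]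
  {μ : Measure Ω} {μ' : Measure Ω'} {f : Ω → α} {f' : Ω' → α}

theorem map_eq_map_of_forall_fiber [Countable α] [MeasurableSingletonClass α]
    (hf : Measurable f) (hf' : Measurable f')
    (h : ∀ a, μ {ω | f ω = a} = μ' {ω | f' ω = a}) : μ.map f = μ'.map f' :=
  Measure.ext_of_singleton fun a => by
    rw [Measure.map_apply hf (measurableSet_singleton a),
      Measure.map_apply hf' (measurableSet_singleton a)]
    exact h a

theorem measureReal_preimage_eq_of_map_eq (hf : Measurable f) (hf' : Measurable f')
    (h : μ.map f = μ'.map f') {B : Set α} (hB : MeasurableSet B) :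
    μ.real (f ⁻¹' B) = μ'.real (f' ⁻¹' B) := by
  rw [← map_measureReal_apply hf hB, h, map_measureReal_apply hf' hB]

theorem condP_preimage_eq_of_map_eq (hf : Measurable f) (hf' : Measurable f')
    (h : μ.map f = μ'.map f') {B C : Set α} (hB : MeasurableSet B) (hC : MeasurableSet C) :
    condP μ (f ⁻¹' B) (f ⁻¹' C) = condP μ' (f' ⁻¹' B) (f' ⁻¹' C) := by
  rw [condP_def, condP_def, ← preimage_inter, ← preimage_inter,
    measureReal_preimage_eq_of_map_eq hf hf' h (hB.inter hC),
    measureReal_preimage_eq_of_map_eq hf hf' h hC]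

end map

/-- Assumptions 5 and 6 for potential states `X0, X1` (in the paper `(Sᵃ, Yᵃ)`) with values in `κ`,
observed as `X = X_A`. -/
structure TransportModel {Ω γ κ : Type*} [MeasurableSpace Ω] [MeasurableSpace γ]
    [MeasurableSpace κ] (μ : Measure Ω) (G : Ω → γ) (A : Ω → Bool) (X0 X1 X : Ω → κ) : Prop where
  measurable_G : Measurable G
  measurable_A : Measurable A
  measurable_X0 : Measurable X0
  measurable_X1 : Measurable X1
  observed : ∀ ω, X ω = bif A ω then X1 ω else X0 ω
  overlap : ∀ g a, condP μ {ω | A ω = a} {ω | G ω = g} ≠ 0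
  indep : ∀ g a i j,
    condP μ ({ω | A ω = a} ∩ ({ω | X0 ω = i} ∩ {ω | X1 ω = j})) {ω | G ω = g} =
      condP μ {ω | A ω = a} {ω | G ω = g} *
        condP μ ({ω | X0 ω = i} ∩ {ω | X1 ω = j}) {ω | G ω = g}
  transport : ∀ i j g, 0 < μ ({ω | X0 ω = i} ∩ {ω | G ω = g}) →
    condP μ {ω | X1 ω = j} ({ω | X0 ω = i} ∩ {ω | G ω = g}) = condP μ {ω | X1 ω = j} {ω | X0 ω = i}

namespace TransportModel

variable {Ω γ κ : Type*} [MeasurableSpace Ω] [MeasurableSpace γ] [MeasurableSpace κ]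
  {μ : Measure Ω} {G : Ω → γ} {A : Ω → Bool} {X0 X1 X : Ω → κ}
  (h : TransportModel μ G A X0 X1 X)
include h

theorem measurable_X : Measurable X := by
  have hX : X = fun ω => if A ω = true then X1 ω else X0 ω :=
    funext fun ω => by rw [h.observed ω]; cases A ω <;> rfl
  rw [hX]
  exact Measurable.ite (h.measurable_A (measurableSet_singleton true)) h.measurable_X1
    h.measurable_X0

theorem measurable_observed : Measurable fun ω => (G ω, A ω, X ω) :=
  h.measurable_G.prodMk (h.measurable_A.prodMk h.measurable_X)

theorem measurable_potential : Measurable fun ω => (G ω, X0 ω, X1 ω) :=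
  h.measurable_G.prodMk (h.measurable_X0.prodMk h.measurable_X1)

variable [IsFiniteMeasure μ]

theorem condP_X1_inter_X0_eq (g : γ) (i j : κ) :
    condP μ ({ω | X1 ω = j} ∩ {ω | X0 ω = i}) {ω | G ω = g} =
      condP μ {ω | X1 ω = j} {ω | X0 ω = i} * condP μ {ω | X0 ω = i} {ω | G ω = g} := by
  rw [condP_inter_eq_mul]
  rcases eq_zero_or_pos (μ ({ω | X0 ω = i} ∩ {ω | G ω = g})) with h0 | hpos
  · simp [condP_def, measureReal_def, h0]
  · rw [h.transport i j g hpos]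

theorem measureReal_fiber_eq (g : γ) (i j : κ) :
    μ.real {ω | (G ω, X0 ω, X1 ω) = (g, i, j)} =
      condP μ {ω | X1 ω = j} {ω | X0 ω = i} * condP μ {ω | X0 ω = i} {ω | G ω = g} *
        μ.real {ω | G ω = g} := by
  have hfiber : {ω | (G ω, X0 ω, X1 ω) = (g, i, j)} =
      ({ω | X1 ω = j} ∩ {ω | X0 ω = i}) ∩ {ω | G ω = g} := by
    ext ω
    simp only [Prod.mk.injEq, mem_inter_iff, mem_ofPred_eq]
    tauto
  rw [hfiber, measureReal_inter_eq_condP_mul, h.condP_X1_inter_X0_eq]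

variable [Fintype κ] [MeasurableSingletonClass κ]

theorem condP_X0_eq_observed (g : γ) (i : κ) :
    condP μ {ω | X0 ω = i} {ω | G ω = g} =
      condP μ {ω | X ω = i} ({ω | A ω = false} ∩ {ω | G ω = g}) := by
  have hind := condP_inter_eq_mul_of_forall_fiber h.measurable_X1 (h.indep g false i)
  rw [← condP_inter_left_eq_of_indep hind (h.overlap g false)]
  refine condP_congr_of_inter_eq (ext fun ω => and_congr_left fun hA => ?_)
  show X0 ω = i ↔ X ω = i
  rw [h.observed ω, show A ω = false from hA, cond_false]

theorem condP_X1_eq_observed (g : γ) (j : κ) :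
    condP μ {ω | X1 ω = j} {ω | G ω = g} =
      condP μ {ω | X ω = j} ({ω | A ω = true} ∩ {ω | G ω = g}) := by
  have hind := condP_inter_eq_mul_of_forall_fiber (E := {ω | A ω = true})
      (F := {ω | G ω = g}) h.measurable_X0 fun i => by
    rw [inter_comm {ω | X1 ω = j}]
    exact h.indep g true i j
  rw [← condP_inter_left_eq_of_indep hind (h.overlap g true)]
  refine condP_congr_of_inter_eq (ext fun ω => and_congr_left fun hA => ?_)
  show X1 ω = j ↔ X ω = j
  rw [h.observed ω, show A ω = true from hA, cond_true]

theorem condP_X1_eq_sum (g : γ) (j : κ) :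
    condP μ {ω | X1 ω = j} {ω | G ω = g} =
      ∑ i, condP μ {ω | X0 ω = i} {ω | G ω = g} * condP μ {ω | X1 ω = j} {ω | X0 ω = i} := by
  rw [condP_eq_sum_inter_fiber h.measurable_X0]
  simp only [h.condP_X1_inter_X0_eq, mul_comm]

omit h in
theorem map_potential_eq_of_map_observed_eq [Countable γ] [MeasurableSingletonClass γ]
    {Ω' : Type*} [MeasurableSpace Ω'] {μ' : Measure Ω'} [IsFiniteMeasure μ'] {G' : Ω' → γ}
    {A' : Ω' → Bool} {X0' X1' X' : Ω' → κ}
    (h : TransportModel μ G A X0 X1 X) (h' : TransportModel μ' G' A' X0' X1' X')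
    (hrank : (Matrix.of fun g i => condP μ {ω | X0 ω = i} {ω | G ω = g}).rank = Fintype.card κ)
    (hobs : μ.map (fun ω => (G ω, A ω, X ω)) = μ'.map (fun ω => (G' ω, A' ω, X' ω))) :
    μ.map (fun ω => (G ω, X0 ω, X1 ω)) = μ'.map (fun ω => (G' ω, X0' ω, X1' ω)) := by
  have hM (g : γ) (i : κ) :
      condP μ {ω | X0 ω = i} {ω | G ω = g} = condP μ' {ω | X0' ω = i} {ω | G' ω = g} := by
    rw [h.condP_X0_eq_observed, h'.condP_X0_eq_observed]
    exact condP_preimage_eq_of_map_eq h.measurable_observed h'.measurable_observed hobs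
      (B := {o | o.2.2 = i}) (C := {o | o.2.1 = false ∧ o.1 = g}) .of_discrete .of_discrete
  have hX1 (g : γ) (j : κ) :
      condP μ {ω | X1 ω = j} {ω | G ω = g} = condP μ' {ω | X1' ω = j} {ω | G' ω = g} := by
    rw [h.condP_X1_eq_observed, h'.condP_X1_eq_observed]
    exact condP_preimage_eq_of_map_eq h.measurable_observed h'.measurable_observed hobs
      (B := {o | o.2.2 = j}) (C := {o | o.2.1 = true ∧ o.1 = g}) .of_discrete .of_discrete
  have htransition (i j : κ) :
      condP μ {ω | X1 ω = j} {ω | X0 ω = i} = condP μ' {ω | X1' ω = j} {ω | X0' ω = i} := by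
    suffices hcol : (fun i => condP μ {ω | X1 ω = j} {ω | X0 ω = i}) =
        fun i => condP μ' {ω | X1' ω = j} {ω | X0' ω = i} from congrFun hcol i
    refine Matrix.mulVec_injective_of_rank_eq_card hrank (funext fun g => ?_)
    simp only [Matrix.mulVec, dotProduct, Matrix.of_apply]
    rw [← h.condP_X1_eq_sum, hX1, h'.condP_X1_eq_sum]
    simp only [hM]
  have hG (g : γ) : μ.real {ω | G ω = g} = μ'.real {ω | G' ω = g} :=
    measureReal_preimage_eq_of_map_eq h.measurable_observed h'.measurable_observed hobs
      (B := {o | o.1 = g}) .of_discrete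
  refine map_eq_map_of_forall_fiber h.measurable_potential h'.measurable_potential
    fun ⟨g, i, j⟩ => ?_
  rw [← ofReal_measureReal, ← ofReal_measureReal, h.measureReal_fiber_eq,
    h'.measureReal_fiber_eq, htransition, hM, hG]

end TransportModel

theorem TransportModel.of_bool_pair {Ω γ : Type*} [MeasurableSpace Ω] [MeasurableSpace γ]
    {μ : Measure Ω} [IsFiniteMeasure μ] {G : Ω → γ} {A S0 S1 Y0 Y1 S Y : Ω → Bool}
    (hG : Measurable G) (hA : Measurable A) (hS0 : Measurable S0) (hS1 : Measurable S1)
    (hY0 : Measurable Y0) (hY1 : Measurable Y1)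
    (hS : ∀ ω, S ω = bif A ω then S1 ω else S0 ω) (hY : ∀ ω, Y ω = bif A ω then Y1 ω else Y0 ω)
    (hoverlap : ∀ g, 0 < condP μ {ω | A ω = true} {ω | G ω = g} ∧
        condP μ {ω | A ω = true} {ω | G ω = g} < 1)
    (hindep : ∀ g (a s0 s1 y0 y1 : Bool),
      condP μ {ω | A ω = a ∧ S0 ω = s0 ∧ S1 ω = s1 ∧ Y0 ω = y0 ∧ Y1 ω = y1} {ω | G ω = g} =
        condP μ {ω | A ω = a} {ω | G ω = g} *
          condP μ {ω | S0 ω = s0 ∧ S1 ω = s1 ∧ Y0 ω = y0 ∧ Y1 ω = y1} {ω | G ω = g})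
    (htransport : ∀ (a b c d : Bool) g, 0 < μ {ω | S0 ω = a ∧ Y0 ω = c ∧ G ω = g} →
      condP μ {ω | S1 ω = b ∧ Y1 ω = d} {ω | S0 ω = a ∧ Y0 ω = c ∧ G ω = g} =
        condP μ {ω | S1 ω = b ∧ Y1 ω = d} {ω | S0 ω = a ∧ Y0 ω = c}) :
    TransportModel μ G A (fun ω => (S0 ω, Y0 ω)) (fun ω => (S1 ω, Y1 ω))
      (fun ω => (S ω, Y ω)) where
  measurable_G := hG
  measurable_A := hA
  measurable_X0 := hS0.prodMk hY0
  measurable_X1 := hS1.prodMk hY1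
  observed ω := by rw [hS, hY]; cases A ω <;> rfl
  overlap g a := by
    obtain ⟨hpos, hlt⟩ := hoverlap g
    cases a
    · have hG : μ.real {ω | G ω = g} ≠ 0 := fun h0 => hpos.ne' (by rw [condP_def, h0, div_zero])
      have hAf : {ω | A ω = false} = {ω | A ω = true}ᶜ := by ext; simp
      rw [hAf, condP_compl (E := {ω | A ω = true}) (hA (measurableSet_singleton true)) hG]
      linarith
    · exact hpos.ne'
  indep := by
    rintro g a ⟨s0, y0⟩ ⟨s1, y1⟩
    convert hindep g a s0 s1 y0 y1 using 3 <;> ext <;>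
      simp only [Prod.mk.injEq, mem_inter_iff, mem_ofPred_eq] <;> tauto
  transport := by
    rintro ⟨a, c⟩ ⟨b, d⟩ g
    have := htransport a b c d g
    simp only [Prod.mk.injEq, ofPred_and, inter_assoc] at this ⊢
    exact this

theorem stmt5_general
    {Ω Ω' : Type*} [MeasurableSpace Ω] [MeasurableSpace Ω']
    (μ : Measure Ω) (μ' : Measure Ω')
    [IsProbabilityMeasure μ] [IsProbabilityMeasure μ']
    {m : ℕ}
    (G : Ω → Fin m) (A S0 S1 Y0 Y1 S Y : Ω → Bool)
    (G' : Ω' → Fin m) (A' S0' S1' Y0' Y1' S' Y' : Ω' → Bool)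
    (hGmeas : Measurable G) (hAmeas : Measurable A)
    (hS0meas : Measurable S0) (hS1meas : Measurable S1)
    (hY0meas : Measurable Y0) (hY1meas : Measurable Y1)
    (hG'meas : Measurable G') (hA'meas : Measurable A')
    (hS0'meas : Measurable S0') (hS1'meas : Measurable S1')
    (hY0'meas : Measurable Y0') (hY1'meas : Measurable Y1')
    (hSdef : ∀ ω, S ω = bif A ω then S1 ω else S0 ω)
    (hYdef : ∀ ω, Y ω = bif A ω then Y1 ω else Y0 ω)
    (hS'def : ∀ ω, S' ω = bif A' ω then S1' ω else S0' ω)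
    (hY'def : ∀ ω, Y' ω = bif A' ω then Y1' ω else Y0' ω)
    -- Assumption 5 for μ
    (hA5ov : ∀ g : Fin m, 0 < condP μ {ω | A ω = true} {ω | G ω = g} ∧
        condP μ {ω | A ω = true} {ω | G ω = g} < 1)
    (hA5ind : ∀ (g : Fin m) (a s0 s1 y0 y1 : Bool),
      condP μ {ω | A ω = a ∧ S0 ω = s0 ∧ S1 ω = s1 ∧ Y0 ω = y0 ∧ Y1 ω = y1} {ω | G ω = g} =
        condP μ {ω | A ω = a} {ω | G ω = g} *
          condP μ {ω | S0 ω = s0 ∧ S1 ω = s1 ∧ Y0 ω = y0 ∧ Y1 ω = y1} {ω | G ω = g})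
    -- Assumption 5 for μ'
    (hA5ov' : ∀ g : Fin m, 0 < condP μ' {ω | A' ω = true} {ω | G' ω = g} ∧
        condP μ' {ω | A' ω = true} {ω | G' ω = g} < 1)
    (hA5ind' : ∀ (g : Fin m) (a s0 s1 y0 y1 : Bool),
      condP μ' {ω | A' ω = a ∧ S0' ω = s0 ∧ S1' ω = s1 ∧ Y0' ω = y0 ∧ Y1' ω = y1}
          {ω | G' ω = g} =
        condP μ' {ω | A' ω = a} {ω | G' ω = g} *
          condP μ' {ω | S0' ω = s0 ∧ S1' ω = s1 ∧ Y0' ω = y0 ∧ Y1' ω = y1} {ω | G' ω = g})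
    -- Assumption 6 for μ
    (hA6 : ∀ (a b c d : Bool) (g : Fin m), 0 < μ {ω | S0 ω = a ∧ Y0 ω = c ∧ G ω = g} →
      condP μ {ω | S1 ω = b ∧ Y1 ω = d} {ω | S0 ω = a ∧ Y0 ω = c ∧ G ω = g} =
        condP μ {ω | S1 ω = b ∧ Y1 ω = d} {ω | S0 ω = a ∧ Y0 ω = c})
    -- Assumption 6 for μ'
    (hA6' : ∀ (a b c d : Bool) (g : Fin m), 0 < μ' {ω | S0' ω = a ∧ Y0' ω = c ∧ G' ω = g} →
      condP μ' {ω | S1' ω = b ∧ Y1' ω = d} {ω | S0' ω = a ∧ Y0' ω = c ∧ G' ω = g} =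
        condP μ' {ω | S1' ω = b ∧ Y1' ω = d} {ω | S0' ω = a ∧ Y0' ω = c})
    -- Condition 3 for μ and μ'
    (hC3 : (Matrix.of fun (g : Fin m) (p : Bool × Bool) =>
      condP μ {ω | S0 ω = p.1 ∧ Y0 ω = p.2} {ω | G ω = g}).rank = 4)
    -- equal observed data distributions
    (hobs : ∀ (g : Fin m) (a s y : Bool),
      μ {ω | G ω = g ∧ A ω = a ∧ S ω = s ∧ Y ω = y} =
        μ' {ω | G' ω = g ∧ A' ω = a ∧ S' ω = s ∧ Y' ω = y}) :
    (∀ (a b c d : Bool) (g : Fin m),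
      condP μ {ω | S0 ω = a ∧ S1 ω = b ∧ Y0 ω = c ∧ Y1 ω = d} {ω | G ω = g} =
        condP μ' {ω | S0' ω = a ∧ S1' ω = b ∧ Y0' ω = c ∧ Y1' ω = d} {ω | G' ω = g}) ∧
    (∀ (a b : Bool) (g : Fin m), 0 < μ {ω | S0 ω = a ∧ S1 ω = b ∧ G ω = g} →
      condP μ {ω | Y1 ω = true} {ω | S0 ω = a ∧ S1 ω = b ∧ G ω = g} -
        condP μ {ω | Y0 ω = true} {ω | S0 ω = a ∧ S1 ω = b ∧ G ω = g} =
      condP μ' {ω | Y1' ω = true} {ω | S0' ω = a ∧ S1' ω = b ∧ G' ω = g} -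
        condP μ' {ω | Y0' ω = true} {ω | S0' ω = a ∧ S1' ω = b ∧ G' ω = g}) := by
  have hmodel := TransportModel.of_bool_pair hGmeas hAmeas hS0meas hS1meas hY0meas hY1meas
    hSdef hYdef hA5ov hA5ind hA6
  have hmodel' := TransportModel.of_bool_pair hG'meas hA'meas hS0'meas hS1'meas hY0'meas
    hY1'meas hS'def hY'def hA5ov' hA5ind' hA6'
  have hrank : (Matrix.of fun g (i : Bool × Bool) =>
      condP μ {ω | (S0 ω, Y0 ω) = i} {ω | G ω = g}).rank = Fintype.card (Bool × Bool) := by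
    simpa only [Prod.ext_iff, Fintype.card_prod, Fintype.card_bool] using hC3
  have hobs_law : μ.map (fun ω => (G ω, A ω, S ω, Y ω)) =
      μ'.map (fun ω => (G' ω, A' ω, S' ω, Y' ω)) :=
    map_eq_map_of_forall_fiber hmodel.measurable_observed hmodel'.measurable_observed
      fun ⟨g, a, s, y⟩ => by simpa only [Prod.mk.injEq] using hobs g a s y
  have hlaw := hmodel.map_potential_eq_of_map_observed_eq hmodel' hrank hobs_law
  -- every event in the conclusion is, definitionally, a preimage under `(G, (S0, Y0), (S1, Y1))`
  have hcondP (B C : Set (Fin m × (Bool × Bool) × (Bool × Bool))) :=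
    condP_preimage_eq_of_map_eq hmodel.measurable_potential hmodel'.measurable_potential hlaw
      (B := B) (C := C) .of_discrete .of_discrete
  refine ⟨fun a b c d g => ?_, fun a b g _ => ?_⟩
  · exact hcondP {u | u.2.1.1 = a ∧ u.2.2.1 = b ∧ u.2.1.2 = c ∧ u.2.2.2 = d} {u | u.1 = g}
  · congr 1
    · exact hcondP {u | u.2.2.2 = true} {u | u.2.1.1 = a ∧ u.2.2.1 = b ∧ u.1 = g}
    · exact hcondP {u | u.2.1.2 = true} {u | u.2.1.1 = a ∧ u.2.2.1 = b ∧ u.1 = g}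

/-- **Corollary 3.** With a binary post-treatment variable `S`, under Assumption 5,
Assumption 6 (transportability of the transition probabilities from `(S⁰, Y⁰)` to
`(S¹, Y¹)`), and Condition 3 (`m ≥ 4` plus a full-column rank condition), the joint
distributions `P(S⁰, S¹, Y⁰, Y¹ | G = g)` are identified from the observed data
distribution; consequently the principal stratification average causal effects
`PSACE_{ab|g}` are identified whenever `μ(S⁰=a, S¹=b, G=g) > 0`. -/
theorem stmt5
    {Ω Ω' : Type*} [MeasurableSpace Ω] [MeasurableSpace Ω']
    (μ : Measure Ω) (μ' : Measure Ω')
    [IsProbabilityMeasure μ] [IsProbabilityMeasure μ']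
    {m : ℕ} (hm : 1 ≤ m)
    (G : Ω → Fin m) (A S0 S1 Y0 Y1 S Y : Ω → Bool)
    (G' : Ω' → Fin m) (A' S0' S1' Y0' Y1' S' Y' : Ω' → Bool)
    (hGmeas : Measurable G) (hAmeas : Measurable A)
    (hS0meas : Measurable S0) (hS1meas : Measurable S1)
    (hY0meas : Measurable Y0) (hY1meas : Measurable Y1)
    (hG'meas : Measurable G') (hA'meas : Measurable A')
    (hS0'meas : Measurable S0') (hS1'meas : Measurable S1')
    (hY0'meas : Measurable Y0') (hY1'meas : Measurable Y1')
    (hSdef : ∀ ω, S ω = bif A ω then S1 ω else S0 ω)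
    (hYdef : ∀ ω, Y ω = bif A ω then Y1 ω else Y0 ω)
    (hS'def : ∀ ω, S' ω = bif A' ω then S1' ω else S0' ω)
    (hY'def : ∀ ω, Y' ω = bif A' ω then Y1' ω else Y0' ω)
    -- Assumption 5 for μ
    (hA5pos : ∀ g : Fin m, 0 < μ {ω | G ω = g})
    (hA5ov : ∀ g : Fin m, 0 < condP μ {ω | A ω = true} {ω | G ω = g} ∧
        condP μ {ω | A ω = true} {ω | G ω = g} < 1)
    (hA5ind : ∀ (g : Fin m) (a s0 s1 y0 y1 : Bool),
      condP μ {ω | A ω = a ∧ S0 ω = s0 ∧ S1 ω = s1 ∧ Y0 ω = y0 ∧ Y1 ω = y1} {ω | G ω = g} =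
        condP μ {ω | A ω = a} {ω | G ω = g} *
          condP μ {ω | S0 ω = s0 ∧ S1 ω = s1 ∧ Y0 ω = y0 ∧ Y1 ω = y1} {ω | G ω = g})
    -- Assumption 5 for μ'
    (hA5pos' : ∀ g : Fin m, 0 < μ' {ω | G' ω = g})
    (hA5ov' : ∀ g : Fin m, 0 < condP μ' {ω | A' ω = true} {ω | G' ω = g} ∧
        condP μ' {ω | A' ω = true} {ω | G' ω = g} < 1)
    (hA5ind' : ∀ (g : Fin m) (a s0 s1 y0 y1 : Bool),
      condP μ' {ω | A' ω = a ∧ S0' ω = s0 ∧ S1' ω = s1 ∧ Y0' ω = y0 ∧ Y1' ω = y1}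
          {ω | G' ω = g} =
        condP μ' {ω | A' ω = a} {ω | G' ω = g} *
          condP μ' {ω | S0' ω = s0 ∧ S1' ω = s1 ∧ Y0' ω = y0 ∧ Y1' ω = y1} {ω | G' ω = g})
    -- Assumption 6 for μ
    (hA6pos : ∀ a c : Bool, 0 < μ {ω | S0 ω = a ∧ Y0 ω = c})
    (hA6 : ∀ (a b c d : Bool) (g : Fin m), 0 < μ {ω | S0 ω = a ∧ Y0 ω = c ∧ G ω = g} →
      condP μ {ω | S1 ω = b ∧ Y1 ω = d} {ω | S0 ω = a ∧ Y0 ω = c ∧ G ω = g} =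
        condP μ {ω | S1 ω = b ∧ Y1 ω = d} {ω | S0 ω = a ∧ Y0 ω = c})
    -- Assumption 6 for μ'
    (hA6pos' : ∀ a c : Bool, 0 < μ' {ω | S0' ω = a ∧ Y0' ω = c})
    (hA6' : ∀ (a b c d : Bool) (g : Fin m), 0 < μ' {ω | S0' ω = a ∧ Y0' ω = c ∧ G' ω = g} →
      condP μ' {ω | S1' ω = b ∧ Y1' ω = d} {ω | S0' ω = a ∧ Y0' ω = c ∧ G' ω = g} =
        condP μ' {ω | S1' ω = b ∧ Y1' ω = d} {ω | S0' ω = a ∧ Y0' ω = c})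
    -- Condition 3 for μ and μ'
    (hm4 : 4 ≤ m)
    (hC3 : (Matrix.of fun (g : Fin m) (p : Bool × Bool) =>
      condP μ {ω | S0 ω = p.1 ∧ Y0 ω = p.2} {ω | G ω = g}).rank = 4)
    (hC3' : (Matrix.of fun (g : Fin m) (p : Bool × Bool) =>
      condP μ' {ω | S0' ω = p.1 ∧ Y0' ω = p.2} {ω | G' ω = g}).rank = 4)
    -- equal observed data distributions
    (hobs : ∀ (g : Fin m) (a s y : Bool),
      μ {ω | G ω = g ∧ A ω = a ∧ S ω = s ∧ Y ω = y} =
        μ' {ω | G' ω = g ∧ A' ω = a ∧ S' ω = s ∧ Y' ω = y}) :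
    (∀ (a b c d : Bool) (g : Fin m),
      condP μ {ω | S0 ω = a ∧ S1 ω = b ∧ Y0 ω = c ∧ Y1 ω = d} {ω | G ω = g} =
        condP μ' {ω | S0' ω = a ∧ S1' ω = b ∧ Y0' ω = c ∧ Y1' ω = d} {ω | G' ω = g}) ∧
    (∀ (a b : Bool) (g : Fin m), 0 < μ {ω | S0 ω = a ∧ S1 ω = b ∧ G ω = g} →
      condP μ {ω | Y1 ω = true} {ω | S0 ω = a ∧ S1 ω = b ∧ G ω = g} -
        condP μ {ω | Y0 ω = true} {ω | S0 ω = a ∧ S1 ω = b ∧ G ω = g} =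
      condP μ' {ω | Y1' ω = true} {ω | S0' ω = a ∧ S1' ω = b ∧ G' ω = g} -
        condP μ' {ω | Y0' ω = true} {ω | S0' ω = a ∧ S1' ω = b ∧ G' ω = g}) :=
  stmt5_general μ μ' G A S0 S1 Y0 Y1 S Y G' A' S0' S1' Y0' Y1' S' Y' hGmeas hAmeas hS0meas hS1meas
    hY0meas hY1meas hG'meas hA'meas hS0'meas hS1'meas hY0'meas hY1'meas hSdef hYdef hS'def hY'def
    hA5ov hA5ind hA5ov' hA5ind' hA6 hA6' hC3 hobs
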